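/- arXiv:2301.12785 — 4 statements merged into one kernel-verified Lean document; each statement's English description precedes it below -/
import Mathlib

section
/- A matrix x ∈ ℝ^{m×n} is strongly feasible for the interval transportation problem (i.e., x ∈ F(s,d) for every s ∈ [s̲,s̄] and every d ∈ [d̲,d̄]) if and only if d̲ = d̄ and x satisfies: x ≥ 0, ∑_j x_{ij} ≤ s̲_i for all i, and ∑_i x_{ij} = d̄_j for all j. -/
open Finset

def Feas {m n : ℕ} (s : Fin m → ℝ) (d : Fin n → ℝ) (x : Fin m → Fin n → ℝ) : Prop :=
  (∀ i j, 0 ≤ x i j) ∧ (∀ i, ∑ j, x i j ≤ s i) ∧ (∀ j, ∑ i, x i j = d j)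

def IsOptimal {m n : ℕ} (c : Fin m → Fin n → ℝ) (s : Fin m → ℝ) (d : Fin n → ℝ)
    (x : Fin m → Fin n → ℝ) : Prop :=
  Feas s d x ∧ ∀ x', Feas s d x' → ∑ i, ∑ j, c i j * x i j ≤ ∑ i, ∑ j, c i j * x' i j

namespace Feas

variable {m n : ℕ} {s s' : Fin m → ℝ} {d d' : Fin n → ℝ} {x : Fin m → Fin n → ℝ}

theorem mono_supply (h : Feas s d x) (hs : s ≤ s') : Feas s' d x :=
  ⟨h.1, fun i => (h.2.1 i).trans (hs i), h.2.2⟩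

theorem demand_eq (h : Feas s d x) (h' : Feas s' d' x) : d = d' :=
  funext fun j => (h.2.2 j).symm.trans (h'.2.2 j)

end Feas

theorem stmt_2_general {m n : ℕ} (slo shi : Fin m → ℝ) (dlo dhi : Fin n → ℝ)
    (hs : slo ≤ shi) (hd : dlo ≤ dhi) (x : Fin m → Fin n → ℝ) :
    (∀ s d, slo ≤ s → s ≤ shi → dlo ≤ d → d ≤ dhi → Feas s d x) ↔
      (dlo = dhi ∧ (∀ i j, 0 ≤ x i j) ∧ (∀ i, ∑ j, x i j ≤ slo i) ∧
        (∀ j, ∑ i, x i j = dhi j)) := by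
  constructor
  · intro h
    have hlo : Feas slo dlo x := h slo dlo le_rfl hs le_rfl hd
    have hhi : Feas slo dhi x := h slo dhi le_rfl hs hd le_rfl
    exact ⟨hlo.demand_eq hhi, hhi⟩
  · rintro ⟨rfl, hx⟩ s d hsl - hdl hdh
    obtain rfl : d = dlo := le_antisymm hdh hdl
    exact Feas.mono_supply hx hsl

theorem stmt_2 {m n : ℕ} (hm : 0 < m) (slo shi : Fin m → ℝ) (dlo dhi : Fin n → ℝ)
    (hs : slo ≤ shi) (hd : dlo ≤ dhi) (x : Fin m → Fin n → ℝ) :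
    (∀ s d, slo ≤ s → s ≤ shi → dlo ≤ d → d ≤ dhi → Feas s d x) ↔
      (dlo = dhi ∧ (∀ i j, 0 ≤ x i j) ∧ (∀ i, ∑ j, x i j ≤ slo i) ∧
        (∀ j, ∑ i, x i j = dhi j)) :=
  stmt_2_general slo shi dlo dhi hs hd x
end

section
/- The interval transportation problem is weakly feasible (some scenario has a nonempty feasible set) if and only if ∑_i s̄_i ≥ ∑_j d̲_j. -/
open Finset

/-!
Summing the demand constraints column by column and the supply constraints row by row shows
that any feasible plan needs `∑ d ≤ ∑ s`. Conversely, if `∑ d̲ ≤ ∑ s̄`, the proportional plan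
`x i j = s̄ i * d̲ j / ∑ s̄` ships exactly `d̲` and stays within `s̄`, so the scenario `(s̄, d̲)`
is feasible.
-/

theorem Feas.sum_le_sum {m n : ℕ} {s : Fin m → ℝ} {d : Fin n → ℝ} {x : Fin m → Fin n → ℝ}
    (hx : Feas s d x) : ∑ j, d j ≤ ∑ i, s i := by
  obtain ⟨-, hrow, hcol⟩ := hx
  calc ∑ j, d j = ∑ j, ∑ i, x i j := by simp only [hcol]
    _ = ∑ i, ∑ j, x i j := Finset.sum_comm
    _ ≤ ∑ i, s i := Finset.sum_le_sum fun i _ => hrow i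

/-- When `∑ s = 0` the demand vanishes, so the junk value `_ / 0 = 0` still gives a valid plan. -/
theorem feas_proportional {m n : ℕ} {s : Fin m → ℝ} {d : Fin n → ℝ} (hs : 0 ≤ s) (hd : 0 ≤ d)
    (hsum : ∑ j, d j ≤ ∑ i, s i) : Feas s d fun i j => s i * d j / ∑ k, s k := by
  have hS : 0 ≤ ∑ k, s k := Finset.sum_nonneg fun k _ => hs k
  refine ⟨fun i j => div_nonneg (mul_nonneg (hs i) (hd j)) hS, fun i => ?_, fun j => ?_⟩
  · calc ∑ j, s i * d j / ∑ k, s k = s i * ((∑ j, d j) / ∑ k, s k) := by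
          rw [← Finset.sum_div, ← Finset.mul_sum, mul_div_assoc]
      _ ≤ s i * 1 := mul_le_mul_of_nonneg_left (div_le_one_of_le₀ hsum hS) (hs i)
      _ = s i := mul_one _
  · rw [← Finset.sum_div, ← Finset.sum_mul, mul_div_right_comm]
    rcases hS.eq_or_lt with hS0 | hSpos
    · have hd0 : d j = 0 :=
        (Finset.sum_eq_zero_iff_of_nonneg fun k _ => hd k).mp
          (le_antisymm (hS0 ▸ hsum) (Finset.sum_nonneg fun k _ => hd k)) j (mem_univ j)
      simp [hd0]
    · rw [div_self hSpos.ne', one_mul]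

theorem stmt_3 {m n : ℕ} (slo shi : Fin m → ℝ) (dlo dhi : Fin n → ℝ)
    (hs0 : 0 ≤ slo) (hs : slo ≤ shi) (hd0 : 0 ≤ dlo) (hd : dlo ≤ dhi) :
    (∃ s d, slo ≤ s ∧ s ≤ shi ∧ dlo ≤ d ∧ d ≤ dhi ∧ ∃ x, Feas s d x) ↔
      ∑ j, dlo j ≤ ∑ i, shi i := by
  constructor
  · rintro ⟨s, d, -, hsh, hdl, -, x, hx⟩
    calc ∑ j, dlo j ≤ ∑ j, d j := Finset.sum_le_sum fun j _ => hdl j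
      _ ≤ ∑ i, s i := hx.sum_le_sum
      _ ≤ ∑ i, shi i := Finset.sum_le_sum fun i _ => hsh i
  · intro hsum
    exact ⟨shi, dlo, hs, le_rfl, le_rfl, hd, _, feas_proportional (hs0.trans hs) hd0 hsum⟩
end

section
/- If x is weakly optimal for the interval transportation problem (optimal for some scenario (c',s',d') with c' ∈ [c̲,c̄], s' ∈ [s̲,s̄], d' ∈ [d̲,d̄]), then x is also optimal for the scenario (c', s, d) where s_i = max{s̲_i, ∑_j x_{ij}} and d_j = ∑_i x_{ij}, and moreover s ∈ [s̲,s̄] and d ∈ [d̲,d̄]. -/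
open Finset

section

variable {m n : ℕ} {s t : Fin m → ℝ} {d e : Fin n → ℝ} {x : Fin m → Fin n → ℝ}

theorem Feas.colSum_eq (h : Feas s d x) : (fun j => ∑ i, x i j) = d :=
  funext h.2.2

theorem Feas.mono_supply_s9 (h : Feas s d x) (hst : s ≤ t) : Feas t d x :=
  ⟨h.1, fun i => (h.2.1 i).trans (hst i), h.2.2⟩

theorem IsOptimal.of_feas_subset {c : Fin m → Fin n → ℝ} (hopt : IsOptimal c s d x)
    (hx : Feas t e x) (hsub : ∀ x', Feas t e x' → Feas s d x') : IsOptimal c t e x :=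
  ⟨hx, fun x' hx' => hopt.2 x' (hsub x' hx')⟩

end

theorem stmt_9_general {m n : ℕ} (c' : Fin m → Fin n → ℝ) (slo shi s' : Fin m → ℝ)
    (dlo dhi d' : Fin n → ℝ) (x : Fin m → Fin n → ℝ)
    (hs1 : slo ≤ s') (hs2 : s' ≤ shi)
    (hd1 : dlo ≤ d') (hd2 : d' ≤ dhi)
    (hopt : IsOptimal c' s' d' x) :
    slo ≤ (fun i => max (slo i) (∑ j, x i j)) ∧
      (fun i => max (slo i) (∑ j, x i j)) ≤ shi ∧
      dlo ≤ (fun j => ∑ i, x i j) ∧ (fun j => ∑ i, x i j) ≤ dhi ∧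
      IsOptimal c' (fun i => max (slo i) (∑ j, x i j)) (fun j => ∑ i, x i j) x := by
  have hfeas := hopt.1
  have hd : (fun j => ∑ i, x i j) = d' := hfeas.colSum_eq
  have hs : (fun i => max (slo i) (∑ j, x i j)) ≤ s' := fun i => max_le (hs1 i) (hfeas.2.1 i)
  refine ⟨fun i => le_max_left _ _, hs.trans hs2, hd ▸ hd1, hd ▸ hd2, ?_⟩
  refine hopt.of_feas_subset ⟨hfeas.1, fun i => le_max_right _ _, fun j => rfl⟩ fun x' hx' => ?_
  rw [hd] at hx'
  exact hx'.mono_supply_s9 hs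

theorem stmt_9 {m n : ℕ} (clo chi c' : Fin m → Fin n → ℝ) (slo shi s' : Fin m → ℝ)
    (dlo dhi d' : Fin n → ℝ) (x : Fin m → Fin n → ℝ)
    (hc1 : clo ≤ c') (hc2 : c' ≤ chi) (hs1 : slo ≤ s') (hs2 : s' ≤ shi)
    (hd1 : dlo ≤ d') (hd2 : d' ≤ dhi)
    (hopt : IsOptimal c' s' d' x) :
    slo ≤ (fun i => max (slo i) (∑ j, x i j)) ∧
      (fun i => max (slo i) (∑ j, x i j)) ≤ shi ∧
      dlo ≤ (fun j => ∑ i, x i j) ∧ (fun j => ∑ i, x i j) ≤ dhi ∧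
      IsOptimal c' (fun i => max (slo i) (∑ j, x i j)) (fun j => ∑ i, x i j) x :=
  stmt_9_general c' slo shi s' dlo dhi d' x hs1 hs2 hd1 hd2 hopt
end

section
/- Suppose the cost matrix c is fixed (c̲ = c̄ = c). If x is strongly feasible for the interval transportation problem and x is optimal for the scenario (c, s̄, d̄), then x is strongly optimal, i.e., x is optimal for every scenario (c, s, d) with s ∈ [s̲,s̄], d ∈ [d̲,d̄]. -/
/-! Since a strongly feasible plan meets every demand scenario with equality, its column sums pin
the demand down to a single vector. Lowering the supplies only shrinks the feasible region, so a
plan that is optimal for the largest supplies and stays feasible for smaller ones remains optimal. -/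

open Finset

section Transportation

variable {m n : ℕ} {c : Fin m → Fin n → ℝ} {s s' : Fin m → ℝ} {d d' : Fin n → ℝ}
  {x : Fin m → Fin n → ℝ}

theorem Feas.mono_supply_s10 (hx : Feas s d x) (hs : s ≤ s') : Feas s' d x :=
  ⟨hx.1, fun i => (hx.2.1 i).trans (hs i), hx.2.2⟩

theorem Feas.demand_eq_s10 (hx : Feas s d x) (hx' : Feas s' d' x) : d = d' :=
  funext fun j => (hx.2.2 j).symm.trans (hx'.2.2 j)

theorem IsOptimal.of_supply_le (hopt : IsOptimal c s' d x) (hx : Feas s d x) (hs : s ≤ s') :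
    IsOptimal c s d x :=
  ⟨hx, fun _ hx' => hopt.2 _ (hx'.mono_supply_s10 hs)⟩

end Transportation

theorem stmt_10_general {m n : ℕ} (c : Fin m → Fin n → ℝ) (slo shi : Fin m → ℝ)
    (dlo dhi : Fin n → ℝ) (hd : dlo ≤ dhi)
    (x : Fin m → Fin n → ℝ)
    (hsf : ∀ s d, slo ≤ s → s ≤ shi → dlo ≤ d → d ≤ dhi → Feas s d x)
    (hopt : IsOptimal c shi dhi x) :
    ∀ s d, slo ≤ s → s ≤ shi → dlo ≤ d → d ≤ dhi → IsOptimal c s d x := by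
  intro s d hs_lo hs_hi hd_lo hd_hi
  have hx : Feas s d x := hsf s d hs_lo hs_hi hd_lo hd_hi
  obtain rfl : d = dhi := hx.demand_eq_s10 (hsf s dhi hs_lo hs_hi hd le_rfl)
  exact hopt.of_supply_le hx hs_hi

theorem stmt_10 {m n : ℕ} (c : Fin m → Fin n → ℝ) (slo shi : Fin m → ℝ)
    (dlo dhi : Fin n → ℝ) (hs : slo ≤ shi) (hd : dlo ≤ dhi)
    (x : Fin m → Fin n → ℝ)
    (hsf : ∀ s d, slo ≤ s → s ≤ shi → dlo ≤ d → d ≤ dhi → Feas s d x)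
    (hopt : IsOptimal c shi dhi x) :
    ∀ s d, slo ≤ s → s ≤ shi → dlo ≤ d → d ≤ dhi → IsOptimal c s d x :=
  stmt_10_general c slo shi dlo dhi hd x hsf hopt
end
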